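/- In the Klee-Walkup polyhedron Ũ₄ = {x ∈ ℝ⁴ : A x ≥ b}, the points (0,0,0,0), (1/6,0,0,0) and (11/75,1/25,0,0) are vertices, the segment from (0,0,0,0) to (1/6,0,0,0) is an edge (a 1-dimensional face) of Ũ₄, and the segment from (1/6,0,0,0) to (11/75,1/25,0,0) is an edge of Ũ₄. -/

import Mathlib

open Matrix

noncomputable section

/-- `F` is a face of `P` of dimension `d`: a nonempty convex extreme subset of `P`
whose affine span has dimension `d`. -/
def IsFaceOfDim {n : ℕ} (P F : Set (Fin n → ℝ)) (d : ℕ) : Prop :=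
  F.Nonempty ∧ Convex ℝ F ∧ IsExtreme ℝ P F ∧
    Module.finrank ℝ (affineSpan ℝ F).direction = d

/-- An edge walk of length `k` between vertices `u` and `v` of `P`: a sequence of vertices
`u = y⁰, …, yᵏ = v` such that each segment `[yⁱ, y^{i+1}]` is an edge (1-dimensional face)
of `P`. -/
def IsEdgeWalk {n : ℕ} (P : Set (Fin n → ℝ)) (k : ℕ) (u v : Fin n → ℝ) : Prop :=
  ∃ y : Fin (k + 1) → (Fin n → ℝ),
    y 0 = u ∧ y (Fin.last k) = v ∧ (∀ i, y i ∈ Set.extremePoints ℝ P) ∧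
    ∀ i : Fin k, IsFaceOfDim P (segment ℝ (y i.castSucc) (y i.succ)) 1
/-- The constraint matrix of the Klee–Walkup polyhedron realization `Ũ₄`. -/
def kwA : Matrix (Fin 8) (Fin 4) ℝ :=
  !![-6, -3, 0, 1;
     -3, -6, 1, 0;
     -35, -45, 6, 3;
     -45, -35, 3, 6;
     1, 0, 0, 0;
     0, 1, 0, 0;
     0, 0, 1, 0;
     0, 0, 0, 1]

/-- The right-hand side of the Klee–Walkup polyhedron realization `Ũ₄`. -/
def kwb : Fin 8 → ℝ := ![-1, -1, -8, -8, 0, 0, 0, 0]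

/-- The polyhedron `Ũ₄`. -/
def polyU : Set (Fin 4 → ℝ) := {x | ∀ i, kwb i ≤ kwA.mulVec x i}

lemma kw_mem_iff (x : Fin 4 → ℝ) : x ∈ polyU ↔
    (-1 ≤ -6*x 0 - 3*x 1 + x 3) ∧ (-1 ≤ -3*x 0 - 6*x 1 + x 2) ∧
    (-8 ≤ -35*x 0 - 45*x 1 + 6*x 2 + 3*x 3) ∧ (-8 ≤ -45*x 0 - 35*x 1 + 3*x 2 + 6*x 3) ∧
    0 ≤ x 0 ∧ 0 ≤ x 1 ∧ 0 ≤ x 2 ∧ 0 ≤ x 3 := by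
  simp [polyU, kwA, kwb, Matrix.mulVec, dotProduct, Fin.sum_univ_four, Fin.forall_fin_succ, Matrix.cons_val]
  constructor
  · rintro ⟨a,b,c,d,e,f,g,h⟩
    refine ⟨by linarith, by linarith, by linarith, by linarith, e, f, g, h⟩
  · rintro ⟨a,b,c,d,e,f,g,h⟩
    refine ⟨by linarith, by linarith, by linarith, by linarith, e, f, g, h⟩

lemma tight_pair {a b u w c : ℝ} (ha : 0 < a) (hb : 0 < b) (hab : a + b = 1)
    (hu : c ≤ u) (hw : c ≤ w) (h : a*u + b*w = c) : u = c ∧ w = c := by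
  have key : a*(u-c) + b*(w-c) = 0 := by linear_combination h - c * hab
  have n1 : 0 ≤ a*(u-c) := mul_nonneg ha.le (sub_nonneg.2 hu)
  have n2 : 0 ≤ b*(w-c) := mul_nonneg hb.le (sub_nonneg.2 hw)
  have h1 : a*(u-c) = 0 := by linarith
  have h2 : b*(w-c) = 0 := by linarith
  have z1 : u - c = 0 := mul_left_cancel₀ (ne_of_gt ha) (by rw [h1, mul_zero])
  have z2 : w - c = 0 := mul_left_cancel₀ (ne_of_gt hb) (by rw [h2, mul_zero])
  constructor <;> linarith [z1, z2]

lemma kw_convex : Convex ℝ polyU := by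
  intro x hx y hy a b ha hb hab
  rw [kw_mem_iff] at hx hy ⊢
  obtain ⟨x0,x1,x2,x3,x4,x5,x6,x7⟩ := hx
  obtain ⟨y0,y1,y2,y3,y4,y5,y6,y7⟩ := hy
  simp only [Pi.add_apply, Pi.smul_apply, smul_eq_mul]
  refine ⟨?_,?_,?_,?_,?_,?_,?_,?_⟩
  · linarith [mul_le_mul_of_nonneg_left x0 ha, mul_le_mul_of_nonneg_left y0 hb]
  · linarith [mul_le_mul_of_nonneg_left x1 ha, mul_le_mul_of_nonneg_left y1 hb]
  · linarith [mul_le_mul_of_nonneg_left x2 ha, mul_le_mul_of_nonneg_left y2 hb]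
  · linarith [mul_le_mul_of_nonneg_left x3 ha, mul_le_mul_of_nonneg_left y3 hb]
  · linarith [mul_le_mul_of_nonneg_left x4 ha, mul_le_mul_of_nonneg_left y4 hb]
  · linarith [mul_le_mul_of_nonneg_left x5 ha, mul_le_mul_of_nonneg_left y5 hb]
  · linarith [mul_le_mul_of_nonneg_left x6 ha, mul_le_mul_of_nonneg_left y6 hb]
  · linarith [mul_le_mul_of_nonneg_left x7 ha, mul_le_mul_of_nonneg_left y7 hb]

lemma v0_mem : (![0, 0, 0, 0] : Fin 4 → ℝ) ∈ polyU := by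
  rw [kw_mem_iff]; simp only [Matrix.cons_val]; norm_num

lemma v1_mem : (![1/6, 0, 0, 0] : Fin 4 → ℝ) ∈ polyU := by
  rw [kw_mem_iff]; simp only [Matrix.cons_val]; norm_num

lemma v2_mem : (![11/75, 1/25, 0, 0] : Fin 4 → ℝ) ∈ polyU := by
  rw [kw_mem_iff]; simp only [Matrix.cons_val]; norm_num

lemma v0_ext : (![0, 0, 0, 0] : Fin 4 → ℝ) ∈ Set.extremePoints ℝ polyU := by
  refine ⟨v0_mem, ?_⟩
  rintro u hu w hw ⟨a, b, ha, hb, hab, habv⟩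
  rw [kw_mem_iff] at hu hw
  obtain ⟨-,-,-,-,u4,u5,u6,u7⟩ := hu
  obtain ⟨-,-,-,-,w4,w5,w6,w7⟩ := hw
  have e0 := congrFun habv 0
  have e1 := congrFun habv 1
  have e2 := congrFun habv 2
  have e3 := congrFun habv 3
  simp only [Pi.add_apply, Pi.smul_apply, smul_eq_mul] at e0 e1 e2 e3
  simp only [Matrix.cons_val] at e0 e1 e2 e3
  norm_num at e0 e1 e2 e3
  obtain ⟨p0, q0⟩ := tight_pair ha hb hab u4 w4 e0
  obtain ⟨p1, q1⟩ := tight_pair ha hb hab u5 w5 e1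
  obtain ⟨p2, q2⟩ := tight_pair ha hb hab u6 w6 e2
  obtain ⟨p3, q3⟩ := tight_pair ha hb hab u7 w7 e3
  (funext j; fin_cases j) <;> simp_all

lemma v1_ext : (![1/6, 0, 0, 0] : Fin 4 → ℝ) ∈ Set.extremePoints ℝ polyU := by
  refine ⟨v1_mem, ?_⟩
  rintro u hu w hw ⟨a, b, ha, hb, hab, habv⟩
  rw [kw_mem_iff] at hu hw
  obtain ⟨u0,-,-,-,-,u5,u6,u7⟩ := hu
  obtain ⟨w0,-,-,-,-,w5,w6,w7⟩ := hw
  have e0 := congrFun habv 0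
  have e1 := congrFun habv 1
  have e2 := congrFun habv 2
  have e3 := congrFun habv 3
  simp only [Pi.add_apply, Pi.smul_apply, smul_eq_mul] at e0 e1 e2 e3
  simp only [Matrix.cons_val] at e0 e1 e2 e3
  norm_num at e0 e1 e2 e3
  obtain ⟨p1, q1⟩ := tight_pair ha hb hab u5 w5 e1
  obtain ⟨p2, q2⟩ := tight_pair ha hb hab u6 w6 e2
  obtain ⟨p3, q3⟩ := tight_pair ha hb hab u7 w7 e3
  have r0 : a * (-6*u 0 - 3*u 1 + u 3) + b * (-6*w 0 - 3*w 1 + w 3) = -1 := by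
    linear_combination (-6) * e0 - 3 * e1 + e3
  obtain ⟨p, q⟩ := tight_pair ha hb hab u0 w0 r0
  have hu0 : u 0 = 1/6 := by linarith
  have hw0 : w 0 = 1/6 := by linarith
  (funext j; fin_cases j) <;> simp_all

lemma v2_ext : (![11/75, 1/25, 0, 0] : Fin 4 → ℝ) ∈ Set.extremePoints ℝ polyU := by
  refine ⟨v2_mem, ?_⟩
  rintro u hu w hw ⟨a, b, ha, hb, hab, habv⟩
  rw [kw_mem_iff] at hu hw
  obtain ⟨u0,-,-,u3,-,-,u6,u7⟩ := hu
  obtain ⟨w0,-,-,w3,-,-,w6,w7⟩ := hw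
  have e0 := congrFun habv 0
  have e1 := congrFun habv 1
  have e2 := congrFun habv 2
  have e3 := congrFun habv 3
  simp only [Pi.add_apply, Pi.smul_apply, smul_eq_mul] at e0 e1 e2 e3
  simp only [Matrix.cons_val] at e0 e1 e2 e3
  norm_num at e0 e1 e2 e3
  obtain ⟨p2, q2⟩ := tight_pair ha hb hab u6 w6 e2
  obtain ⟨p3, q3⟩ := tight_pair ha hb hab u7 w7 e3
  have r0 : a * (-6*u 0 - 3*u 1 + u 3) + b * (-6*w 0 - 3*w 1 + w 3) = -1 := by
    linear_combination (-6) * e0 - 3 * e1 + e3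
  have r3 : a * (-45*u 0 - 35*u 1 + 3*u 2 + 6*u 3) + b * (-45*w 0 - 35*w 1 + 3*w 2 + 6*w 3) = -8 := by
    linear_combination (-45) * e0 - 35 * e1 + 3 * e2 + 6 * e3
  obtain ⟨s0, t0⟩ := tight_pair ha hb hab u0 w0 r0
  obtain ⟨s3, t3⟩ := tight_pair ha hb hab u3 w3 r3
  have hu0 : u 0 = 11/75 := by linarith
  have hu1 : u 1 = 1/25 := by linarith
  have hw0 : w 0 = 11/75 := by linarith
  have hw1 : w 1 = 1/25 := by linarith
  (funext j; fin_cases j) <;> simp_all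

lemma seg1_char (x : Fin 4 → ℝ) (hx : x ∈ polyU) (h1 : x 1 = 0) (h2 : x 2 = 0)
    (h3 : x 3 = 0) : x ∈ segment ℝ (![0,0,0,0] : Fin 4 → ℝ) ![1/6,0,0,0] := by
  rw [kw_mem_iff] at hx
  obtain ⟨c0,c1,c2,c3,c4,c5,c6,c7⟩ := hx
  refine ⟨1 - 6 * x 0, 6 * x 0, by linarith, by linarith, by ring, ?_⟩
  funext j; fin_cases j <;> simp <;> linarith

lemma seg2_char (x : Fin 4 → ℝ) (hx : x ∈ polyU) (h2 : x 2 = 0) (h3 : x 3 = 0)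
    (h0 : -6 * x 0 - 3 * x 1 = -1) :
    x ∈ segment ℝ (![1/6,0,0,0] : Fin 4 → ℝ) ![11/75,1/25,0,0] := by
  rw [kw_mem_iff] at hx
  obtain ⟨c0,c1,c2,c3,c4,c5,c6,c7⟩ := hx
  refine ⟨1 - 25 * x 1, 25 * x 1, by linarith, by linarith, by ring, ?_⟩
  funext j; fin_cases j <;> simp <;> linarith

lemma finrank_seg (a b : Fin 4 → ℝ) (hab : a ≠ b) :
    Module.finrank ℝ (affineSpan ℝ (segment ℝ a b)).direction = 1 := by
  have h1 : affineSpan ℝ (segment ℝ a b) = affineSpan ℝ {a, b} := by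
    apply le_antisymm
    · rw [affineSpan_le]
      rw [← convexHull_pair]
      exact (convexHull_subset_affineSpan _).trans (by rfl)
    · exact affineSpan_mono ℝ
        (Set.insert_subset (left_mem_segment ℝ a b)
          (Set.singleton_subset_iff.2 (right_mem_segment ℝ a b)))
  rw [h1, direction_affineSpan, vectorSpan_pair]
  exact finrank_span_singleton (vsub_ne_zero.2 hab)

lemma edge1 : IsFaceOfDim polyU (segment ℝ ![0, 0, 0, 0] ![1/6, 0, 0, 0]) 1 := by
  have hne : (![0,0,0,0] : Fin 4 → ℝ) ≠ ![1/6,0,0,0] := by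
    intro h
    have := congrFun h 0
    norm_num at this
  refine ⟨⟨_, left_mem_segment ℝ _ _⟩, convex_segment _ _, ⟨?_, ?_⟩, finrank_seg _ _ hne⟩
  · exact Convex.segment_subset kw_convex v0_mem v1_mem
  · intro u hu w hw x hxF hxo
    obtain ⟨a, b, ha, hb, hab, habv⟩ := hxo
    obtain ⟨s, t, hs, ht, hst, hsx⟩ := hxF
    have hx1 : x 1 = 0 := by
      rw [← hsx]; simp
    have hx2 : x 2 = 0 := by
      rw [← hsx]; simp
    have hx3 : x 3 = 0 := by
      rw [← hsx]; simp
    have huP := hu; have hwP := hw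
    rw [kw_mem_iff] at hu hw
    obtain ⟨-,-,-,-,-,u5,u6,u7⟩ := hu
    obtain ⟨-,-,-,-,-,w5,w6,w7⟩ := hw
    have e1 := congrFun habv 1
    have e2 := congrFun habv 2
    have e3 := congrFun habv 3
    simp only [Pi.add_apply, Pi.smul_apply, smul_eq_mul] at e1 e2 e3
    rw [hx1] at e1; rw [hx2] at e2; rw [hx3] at e3
    obtain ⟨p1, q1⟩ := tight_pair ha hb hab u5 w5 e1
    obtain ⟨p2, q2⟩ := tight_pair ha hb hab u6 w6 e2
    obtain ⟨p3, q3⟩ := tight_pair ha hb hab u7 w7 e3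
    exact seg1_char u huP p1 p2 p3

lemma edge2 : IsFaceOfDim polyU (segment ℝ ![1/6, 0, 0, 0] ![11/75, 1/25, 0, 0]) 1 := by
  have hne : (![1/6,0,0,0] : Fin 4 → ℝ) ≠ ![11/75,1/25,0,0] := by
    intro h
    have := congrFun h 1
    norm_num at this
  refine ⟨⟨_, left_mem_segment ℝ _ _⟩, convex_segment _ _, ⟨?_, ?_⟩, finrank_seg _ _ hne⟩
  · exact Convex.segment_subset kw_convex v1_mem v2_mem
  · intro u hu w hw x hxF hxo
    obtain ⟨a, b, ha, hb, hab, habv⟩ := hxo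
    obtain ⟨s, t, hs, ht, hst, hsx⟩ := hxF
    have hx2 : x 2 = 0 := by rw [← hsx]; simp
    have hx3 : x 3 = 0 := by rw [← hsx]; simp
    have hx0 : -6 * x 0 - 3 * x 1 = -1 := by
      have f0 : x 0 = s * (1/6) + t * (11/75) := by rw [← hsx]; simp
      have f1 : x 1 = t * (1/25) := by rw [← hsx]; simp
      rw [f0, f1]; linarith
    have huP := hu; have hwP := hw
    rw [kw_mem_iff] at hu hw
    obtain ⟨u0,-,-,-,-,-,u6,u7⟩ := hu
    obtain ⟨w0,-,-,-,-,-,w6,w7⟩ := hw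
    have e0 := congrFun habv 0
    have e1 := congrFun habv 1
    have e2 := congrFun habv 2
    have e3 := congrFun habv 3
    simp only [Pi.add_apply, Pi.smul_apply, smul_eq_mul] at e0 e1 e2 e3
    rw [hx2] at e2; rw [hx3] at e3
    obtain ⟨p2, q2⟩ := tight_pair ha hb hab u6 w6 e2
    obtain ⟨p3, q3⟩ := tight_pair ha hb hab u7 w7 e3
    have u0' : -1 ≤ -6*u 0 - 3*u 1 := by linarith
    have w0' : -1 ≤ -6*w 0 - 3*w 1 := by linarith
    have r0 : a * (-6*u 0 - 3*u 1) + b * (-6*w 0 - 3*w 1) = -1 := by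
      rw [← hx0]; linear_combination (-6) * e0 - 3 * e1
    obtain ⟨pp, qq⟩ := tight_pair ha hb hab u0' w0' r0
    exact seg2_char u huP p2 p3 pp

/-- In the Klee–Walkup polyhedron `Ũ₄`, the points `(0,0,0,0)`, `(1/6,0,0,0)` and
`(11/75,1/25,0,0)` are vertices, and the segments from `(0,0,0,0)` to `(1/6,0,0,0)` and from
`(1/6,0,0,0)` to `(11/75,1/25,0,0)` are edges (1-dimensional faces) of `Ũ₄`. -/
theorem kw_vertices_and_edges :
    (![0, 0, 0, 0] : Fin 4 → ℝ) ∈ Set.extremePoints ℝ polyU ∧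
    (![1/6, 0, 0, 0] : Fin 4 → ℝ) ∈ Set.extremePoints ℝ polyU ∧
    (![11/75, 1/25, 0, 0] : Fin 4 → ℝ) ∈ Set.extremePoints ℝ polyU ∧
    IsFaceOfDim polyU (segment ℝ ![0, 0, 0, 0] ![1/6, 0, 0, 0]) 1 ∧
    IsFaceOfDim polyU (segment ℝ ![1/6, 0, 0, 0] ![11/75, 1/25, 0, 0]) 1 :=
  ⟨v0_ext, v1_ext, v2_ext, edge1, edge2⟩
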